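/- Let n ≥ 2 and β = n/(n-1). Suppose (Ω, μ) is a probability space and u : Ω → ℝ satisfies, for every p ≥ 2, max{||u||_{L^{pβ}}, 1} ≤ (C·p)^{1/p} · max{||u||_{L^p}, 1} for a fixed constant C ≥ 1. Then u ∈ L^∞ and there is a constant C₆ depending only on C and β with ||u||_{L^∞} ≤ C₆ · max{||u||_{L²}, 1}. -/

import Mathlib

/-!
Iterating the hypothesis along the exponents `p_k = 2 β^k` bounds every
`‖u‖_{p_k}` by `∏_{j<k} (C p_j)^{1/p_j} · max(‖u‖₂, 1)`. Since `log (C p) / p ≤ 2 √C / √p`, the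
logarithm of this product is dominated by a geometric series in `β^{-1/2}`, so the bound is
uniform in `k`; and a uniform bound on `‖u‖_p` along exponents `p → ∞` bounds `‖u‖_∞` by
Chebyshev's inequality.
-/

open MeasureTheory Filter Finset Topology
open scoped ENNReal

section
variable {α E : Type*} [MeasurableSpace α] {μ : Measure α} [NormedAddCommGroup E] {f : α → E}

theorem meas_ge_le_inv_mul_rpow_of_eLpNorm_le {p : ℝ} (hp : 0 < p) (hf : AEStronglyMeasurable f μ)
    {ε M : ℝ≥0∞} (hε : ε ≠ 0) (hε_top : ε ≠ ∞) (hM : eLpNorm f (ENNReal.ofReal p) μ ≤ M) :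
    μ {x | ε ≤ ‖f x‖ₑ} ≤ (ε⁻¹ * M) ^ p := by
  have hp_ne : ENNReal.ofReal p ≠ 0 := by simpa using hp
  calc μ {x | ε ≤ ‖f x‖ₑ}
      ≤ ε⁻¹ ^ p * eLpNorm f (ENNReal.ofReal p) μ ^ p := by
        simpa [ENNReal.toReal_ofReal hp.le] using
          meas_ge_le_mul_pow_eLpNorm_enorm μ hp_ne ENNReal.ofReal_ne_top hf hε
            (fun h => absurd h hε_top)
    _ ≤ ε⁻¹ ^ p * M ^ p := by gcongr
    _ = (ε⁻¹ * M) ^ p := (ENNReal.mul_rpow_of_nonneg _ _ hp.le).symm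

theorem eLpNorm_top_le_of_tendsto_exponent {ι : Type*} {l : Filter ι} [l.NeBot] {p : ι → ℝ}
    (hp : Tendsto p l atTop) (hf : AEStronglyMeasurable f μ) {M : ℝ≥0∞}
    (hM : ∀ᶠ i in l, eLpNorm f (ENNReal.ofReal (p i)) μ ≤ M) :
    eLpNorm f ∞ μ ≤ M := by
  rw [eLpNorm_exponent_top]
  refine le_of_forall_gt_imp_ge_of_dense fun ε hMε => ?_
  rcases eq_or_ne ε ∞ with rfl | hε_top
  · exact le_top
  have hε : ε ≠ 0 := (hMε.trans_le' bot_le).ne'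
  have hx : ε⁻¹ * M < 1 := by
    rw [mul_comm, ← div_eq_mul_inv]; exact ENNReal.div_lt_of_lt_mul (by simpa using hMε)
  have h_null : μ {x | ε ≤ ‖f x‖ₑ} = 0 := by
    refine le_antisymm (ge_of_tendsto
      ((ENNReal.tendsto_rpow_atTop_of_base_lt_one hx).comp hp) ?_) bot_le
    filter_upwards [hM, hp.eventually_gt_atTop 0] with i hi hpi
    exact meas_ge_le_inv_mul_rpow_of_eLpNorm_le hpi hf hε hε_top hi
  exact essSup_le_of_ae_le ε
    (measure_mono_null (fun x (hx : ¬‖f x‖ₑ ≤ ε) => (not_le.mp hx).le) h_null)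

end

theorem le_prod_range_mul_of_le_mul {α : Type*} [CommMonoid α] [PartialOrder α] [MulLeftMono α]
    {a c : ℕ → α} (h : ∀ k, a (k + 1) ≤ c k * a k) (k : ℕ) :
    a k ≤ (∏ j ∈ range k, c j) * a 0 := by
  induction k with
  | zero => simp
  | succ k ih =>
    calc a (k + 1) ≤ c k * a k := h k
      _ ≤ c k * ((∏ j ∈ range k, c j) * a 0) := mul_le_mul_right ih _
      _ = (∏ j ∈ range (k + 1), c j) * a 0 := by rw [prod_range_succ, mul_comm _ (c k), mul_assoc]

theorem Real.mul_rpow_one_div_le_exp {C p : ℝ} (hC : 0 < C) (hp : 0 < p) :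
    (C * p) ^ (1 / p) ≤ Real.exp (2 * √C / √p) := by
  have hCp : 0 < C * p := mul_pos hC hp
  have hlog : Real.log (C * p) ≤ 2 * √(C * p) := by
    simpa [Real.sqrt_eq_rpow, div_eq_mul_inv, mul_comm] using
      Real.log_le_rpow_div hCp.le (by norm_num : (0 : ℝ) < 1 / 2)
  have hsp : 0 < √p := Real.sqrt_pos.mpr hp
  rw [Real.rpow_def_of_pos hCp, Real.exp_le_exp]
  calc Real.log (C * p) * (1 / p) ≤ 2 * √(C * p) * (1 / p) := by gcongr
    _ = 2 * √C / √p := by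
      rw [Real.sqrt_mul hC.le, ← Real.mul_self_sqrt hp.le, Real.sqrt_mul_self hsp.le]
      field_simp

theorem prod_range_mul_rpow_one_div_le_exp {C β : ℝ} (hC : 0 < C) (hβ : 1 < β) (k : ℕ) :
    ∏ j ∈ range k, (C * (2 * β ^ j)) ^ (1 / (2 * β ^ j)) ≤
      Real.exp (2 * √C / (1 - (√β)⁻¹)) := by
  set r := (√β)⁻¹
  have hsβ : 1 < √β := by rwa [Real.lt_sqrt zero_le_one, one_pow]
  have hr0 : 0 ≤ r := by positivity
  have hr1 : r < 1 := inv_lt_one_of_one_lt₀ hsβ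
  have hterm : ∀ j, 1 / √(2 * β ^ j) ≤ r ^ j := fun j => by
    rw [inv_pow, ← one_div]
    have : √β ^ j ≤ √(2 * β ^ j) := by
      rw [Real.le_sqrt' (by positivity), ← pow_mul, mul_comm, pow_mul, Real.sq_sqrt (by linarith)]
      linarith [one_le_pow₀ (n := j) hβ.le]
    gcongr
  calc ∏ j ∈ range k, (C * (2 * β ^ j)) ^ (1 / (2 * β ^ j))
      ≤ ∏ j ∈ range k, Real.exp (2 * √C * r ^ j) := by
        gcongr with j
        refine (Real.mul_rpow_one_div_le_exp hC (by positivity)).trans ?_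
        rw [Real.exp_le_exp, div_eq_mul_one_div]
        gcongr
        exact hterm j
    _ = Real.exp (2 * √C * ∑ j ∈ range k, r ^ j) := by rw [← Real.exp_sum, mul_sum]
    _ ≤ Real.exp (2 * √C / (1 - r)) := by
        rw [Real.exp_le_exp, div_eq_mul_one_div]
        gcongr
        simpa using geom_sum_Ico_le_of_lt_one (m := 0) (n := k) hr0 hr1

theorem moser_iteration_Linfty_bound (n : ℕ) (hn : 2 ≤ n) (C : ℝ) (hC : 1 ≤ C)
    (β : ℝ) (hβ : β = (n : ℝ) / (n - 1)) :
    ∃ C₆ : ℝ, 0 < C₆ ∧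
      ∀ (Ω : Type) (_ : MeasurableSpace Ω) (μ : Measure Ω), IsProbabilityMeasure μ →
        ∀ u : Ω → ℝ, MemLp u 2 μ →
          (∀ p : ℝ, 2 ≤ p →
            max (eLpNorm u (ENNReal.ofReal (p * β)) μ) 1 ≤
              ENNReal.ofReal ((C * p) ^ (1 / p)) * max (eLpNorm u (ENNReal.ofReal p) μ) 1) →
          MemLp u ⊤ μ ∧
            eLpNorm u ⊤ μ ≤ ENNReal.ofReal C₆ * max (eLpNorm u 2 μ) 1 := by
  have hβ1 : 1 < β := by
    have hn' : (2 : ℝ) ≤ n := by exact_mod_cast hn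
    rw [hβ, lt_div_iff₀ (by linarith)]; linarith
  have hC0 : 0 < C := by linarith
  refine ⟨_, Real.exp_pos (2 * √C / (1 - (√β)⁻¹)), fun Ω _ μ _ u hu hmoser => ?_⟩
  have hp2 : ∀ k : ℕ, 2 ≤ 2 * β ^ k := fun k => by linarith [one_le_pow₀ (n := k) hβ1.le]
  have hiter := le_prod_range_mul_of_le_mul
    (a := fun k => max (eLpNorm u (ENNReal.ofReal (2 * β ^ k)) μ) 1)
    (c := fun k => ENNReal.ofReal ((C * (2 * β ^ k)) ^ (1 / (2 * β ^ k))))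
    fun k => by simpa only [mul_assoc, ← pow_succ] using hmoser _ (hp2 k)
  have hbound : ∀ k : ℕ, eLpNorm u (ENNReal.ofReal (2 * β ^ k)) μ ≤
      ENNReal.ofReal (Real.exp (2 * √C / (1 - (√β)⁻¹))) * max (eLpNorm u 2 μ) 1 := fun k => by
    refine (le_max_left _ 1).trans ((hiter k).trans ?_)
    rw [← ENNReal.ofReal_prod_of_nonneg fun j _ => Real.rpow_nonneg (by positivity) _]
    simpa using mul_le_mul_left (ENNReal.ofReal_le_ofReal
      (prod_range_mul_rpow_one_div_le_exp hC0 hβ1 k)) (max (eLpNorm u 2 μ) 1)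
  have htop := eLpNorm_top_le_of_tendsto_exponent
    ((tendsto_pow_atTop_atTop_of_one_lt hβ1).const_mul_atTop two_pos) hu.1
    (Eventually.of_forall hbound)
  refine ⟨⟨hu.1, htop.trans_lt (ENNReal.mul_lt_top ENNReal.ofReal_lt_top ?_)⟩, htop⟩
  exact max_lt hu.eLpNorm_lt_top ENNReal.one_lt_top
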